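/- Let n ≥ 4 be even and let W ⊆ V(H_n) contain the entire row R_1 = {0,…,n−1} × {1}. Then the graph H_n(W) obtained by replicating W is not 4-colourable. -/

import Mathlib

/-- Replicating a set `W` of vertices of `G`: each `w ∈ W` gets a clone (the
corresponding element of `Sum.inr`) adjacent to `w` and to all its neighbours. -/
def SimpleGraph.replicateSet {V : Type} (G : SimpleGraph V) (W : Set V) :
    SimpleGraph (V ⊕ W) where
  Adj x y :=
    match x, y with
    | Sum.inl a, Sum.inl b => G.Adj a b
    | Sum.inl a, Sum.inr b => G.Adj a (b : V) ∨ a = (b : V)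
    | Sum.inr a, Sum.inl b => G.Adj (a : V) b ∨ (a : V) = b
    | Sum.inr a, Sum.inr b => G.Adj (a : V) (b : V)
  symm := by
    constructor
    rintro (a | a) (b | b) h <;> simp only at h ⊢ <;>
      first
        | exact G.adj_symm h
        | (rcases h with h | h
           · exact Or.inl (G.adj_symm h)
           · exact Or.inr h.symm)
  loopless := by
    constructor
    rintro (a | a) h <;> simp only at h <;> exact G.irrefl h

/-- Gallai's graph `H n`: the Cartesian product of the path on `Fin n` with the
triangle on `ZMod 3`, together with the three twist edges joining `(0, j)` to
`(n-1, -j)`. -/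
def Hgraph (n : ℕ) : SimpleGraph (Fin n × ZMod 3) :=
  SimpleGraph.fromRel (fun x y =>
    (x.1 = y.1 ∧ x.2 ≠ y.2) ∨
    ((x.1 : ℕ) + 1 = (y.1 : ℕ) ∧ x.2 = y.2) ∨
    ((x.1 : ℕ) = 0 ∧ (y.1 : ℕ) = n - 1 ∧ y.2 = -x.2))

/-- `G` is `k`-critical: `χ(G) = k` and deleting any vertex leaves a
`(k-1)`-colourable graph. -/
def SimpleGraph.IsCrit {V : Type} (G : SimpleGraph V) (k : ℕ) : Prop :=
  G.chromaticNumber = k ∧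
    ∀ v : V, (SimpleGraph.induce {u | u ≠ v} G).Colorable (k - 1)

/-!
In a proper 4-colouring of the replicated graph, each vertex `(i, 1)` of the first row and its
clone receive a set `Sᵢ` of two colours. Consecutive columns `i, i + 1` span a `K₄` on these four
vertices, so `Sᵢ₊₁` is the complement of `Sᵢ`, and as `n - 1` is odd, `Sₙ₋₁ = S₀ᶜ`. The vertex
`(n - 1, 2) = (n - 1, -1)` is adjacent to `(n - 1, 1)` and its clone, so its colour lies in `S₀`;
but through the twist edges it is also adjacent to `(0, 1)` and its clone, so its colour avoids
`S₀`.
-/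

open Finset SimpleGraph

theorem Finset.eq_ite_even_compl_of_disjoint_succ {α : Type*} [Fintype α] [DecidableEq α]
    {k m : ℕ} (hα : Fintype.card α = 2 * k) (s : Fin (m + 1) → Finset α)
    (hcard : ∀ i, #(s i) = k) (hdisj : ∀ i : Fin m, Disjoint (s i.castSucc) (s i.succ)) :
    ∀ i, s i = if Even (i : ℕ) then s 0 else (s 0)ᶜ := by
  refine Fin.induction (by simp) fun i ih => ?_
  have hsucc : s i.succ = (s i.castSucc)ᶜ :=
    (compl_eq_of_disjoint_of_card_add_eq (hdisj i) (by simp [hcard, hα, two_mul])).symm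
  rw [hsucc, ih]
  by_cases hi : Even (i : ℕ) <;> simp [hi, Nat.even_add_one]

namespace SimpleGraph

variable {V : Type} {G : SimpleGraph V} {W : Set V}

theorem replicateSet_adj_inl_inr_self (w : W) : (G.replicateSet W).Adj (.inl w) (.inr w) :=
  Or.inr rfl

section Coloring

variable {α : Type*} [DecidableEq α] (c : (G.replicateSet W).Coloring α)

def cloneColours (w : W) : Finset α := {c (.inl w), c (.inr w)}

theorem card_cloneColours (w : W) : #(cloneColours c w) = 2 :=
  card_pair (c.valid (replicateSet_adj_inl_inr_self w))

theorem colour_notMem_cloneColours {z : V ⊕ W} {w : W}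
    (hl : (G.replicateSet W).Adj z (.inl w)) (hr : (G.replicateSet W).Adj z (.inr w)) :
    c z ∉ cloneColours c w := by
  simp only [cloneColours, mem_insert, mem_singleton, not_or]
  exact ⟨c.valid hl, c.valid hr⟩

theorem disjoint_cloneColours {u w : W} (h : G.Adj u w) :
    Disjoint (cloneColours c u) (cloneColours c w) := by
  simp only [cloneColours, disjoint_insert_left, disjoint_singleton_left]
  exact ⟨colour_notMem_cloneColours c h (Or.inl h),
    colour_notMem_cloneColours c (Or.inl h) h⟩

end Coloring

end SimpleGraph

theorem Hgraph_adj_of_snd_ne {n : ℕ} (i : Fin n) {j j' : ZMod 3} (h : j ≠ j') :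
    (Hgraph n).Adj (i, j) (i, j') := by
  rw [Hgraph, SimpleGraph.fromRel_adj]
  exact ⟨by simpa using h, Or.inl (Or.inl ⟨rfl, h⟩)⟩

theorem Hgraph_adj_castSucc_succ {m : ℕ} (i : Fin m) (j : ZMod 3) :
    (Hgraph (m + 1)).Adj (i.castSucc, j) (i.succ, j) := by
  rw [Hgraph, SimpleGraph.fromRel_adj]
  exact ⟨by simp [Fin.ext_iff], Or.inl (Or.inr (Or.inl ⟨rfl, rfl⟩))⟩

theorem Hgraph_adj_zero_last {m : ℕ} {j : ZMod 3} (hj : j ≠ 0) :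
    (Hgraph (m + 1)).Adj (0, j) (Fin.last m, -j) := by
  rw [Hgraph, SimpleGraph.fromRel_adj]
  have hneg : j ≠ -j := by revert j; decide
  exact ⟨fun he => hneg (congrArg Prod.snd he), Or.inl (Or.inr (Or.inr ⟨rfl, by simp, rfl⟩))⟩

/-- If `n ≥ 4` is even and `W` contains the whole row `R₁ = {0,…,n-1} × {1}`,
then the replicated graph is not 4-colourable. -/
theorem replicate_row_one_even (n : ℕ) (hn : 4 ≤ n) (heven : Even n)
    (W : Set (Fin n × ZMod 3))
    (h : {v : Fin n × ZMod 3 | v.2 = 1} ⊆ W) :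
    ¬ ((Hgraph n).replicateSet W).Colorable 4 := by
  rintro ⟨c⟩
  obtain ⟨m, rfl⟩ : ∃ m, n = m + 1 := ⟨n - 1, by omega⟩
  let row : Fin (m + 1) → W := fun i => ⟨(i, 1), h rfl⟩
  let s i := cloneColours c (row i)
  have halt := Finset.eq_ite_even_compl_of_disjoint_succ (Fintype.card_fin 4) s
    (fun i => card_cloneColours c _)
    (fun i => disjoint_cloneColours c (Hgraph_adj_castSucc_succ i 1))
  have hm : ¬ Even m := by rwa [Nat.even_add_one] at heven
  have hlast : s (Fin.last m) = (s 0)ᶜ := by simpa [hm] using halt (Fin.last m)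
  let x : (Fin (m + 1) × ZMod 3) ⊕ W := .inl (Fin.last m, -1)
  have hcol : (Hgraph (m + 1)).Adj (Fin.last m, -1) (row (Fin.last m)) :=
    Hgraph_adj_of_snd_ne _ (by decide)
  have htwist : (Hgraph (m + 1)).Adj (Fin.last m, -1) (row 0) :=
    (Hgraph_adj_zero_last one_ne_zero).symm
  have hx_last : c x ∉ s (Fin.last m) := colour_notMem_cloneColours c hcol (Or.inl hcol)
  have hx_zero : c x ∉ s 0 := colour_notMem_cloneColours c htwist (Or.inl htwist)
  rw [hlast, mem_compl] at hx_last
  exact hx_last hx_zero
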